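/- Let C be a permutation-invariant partition of the player set of a finite normal-form game with identical interests. If p ∈ Δ^n is a mean-centric equilibrium, then its centroid distribution p̄ is a symmetric Nash equilibrium: p ∈ MCE implies p̄ ∈ SNE. -/

import Mathlib

open MeasureTheory Filter Topology

noncomputable section

namespace ECFP

variable {ι A κ : Type*}

/-- The mixed-strategy simplex over a finite action set `Y` inside the action universe `A`. -/
def simplex (Y : Finset A) : Set (A → ℝ) :=
  {p | (∀ a, 0 ≤ p a) ∧ (∀ a, a ∉ Y → p a = 0) ∧ ∑ a ∈ Y, p a = 1}

/-- The space `Δⁿ` of joint mixed strategies. -/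
def Delta (Y : ι → Finset A) : Set (ι → A → ℝ) :=
  {p | ∀ i, p i ∈ simplex (Y i)}

variable [Fintype ι] [DecidableEq ι] [Fintype A] [DecidableEq κ]

/-- The mixed extension of the common utility `u`:
`U(p₁,…,pₙ) = ∑_y u(y) p₁(y₁)⋯pₙ(yₙ)`. -/
def U (u : (ι → A) → ℝ) (p : ι → A → ℝ) : ℝ :=
  ∑ y : ι → A, u y * ∏ i, p i (y i)

/-- The `ε`-best-response set of player `i` against the joint strategy `p`
(only the components `p_{-i}` matter, since player `i`'s component is overwritten):
`{pᵢ ∈ Δᵢ : U(pᵢ,p_{-i}) ≥ U(qᵢ,p_{-i}) - ε  ∀ qᵢ ∈ Δᵢ}`. -/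
def BRi (Y : ι → Finset A) (u : (ι → A) → ℝ) (ε : ℝ) (p : ι → A → ℝ) (i : ι) :
    Set (A → ℝ) :=
  {pi | pi ∈ simplex (Y i) ∧
    ∀ qi ∈ simplex (Y i),
      U u (Function.update p i pi) ≥ U u (Function.update p i qi) - ε}

/-- The joint `ε`-best-response set `BR^ε(p) = (BR₁^ε(p_{-1}),…,BRₙ^ε(p_{-n}))`. -/
def BR (Y : ι → Finset A) (u : (ι → A) → ℝ) (ε : ℝ) (p : ι → A → ℝ) :
    Set (ι → A → ℝ) :=
  {b | ∀ i, b i ∈ BRi Y u ε p i}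

/-- The profile obtained from `y` by swapping the strategies of players `i` and `j`. -/
def swapStrat (y : ι → A) (i j : ι) : ι → A :=
  Function.update (Function.update y i (y j)) j (y i)

/-- `cls : ι → κ` encodes a permutation-invariant partition of the player set (the classes
are the fibers of `cls`): players in the same class have the same action set, and the utility
is invariant under swapping the strategies of two same-class players in any strategy profile. -/
def PermInvariant (Y : ι → Finset A) (u : (ι → A) → ℝ) (cls : ι → κ) : Prop :=
  ∀ i j : ι, cls i = cls j →
    Y i = Y j ∧ ∀ y : ι → A, (∀ k, y k ∈ Y k) → u (swapStrat y i j) = u y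

/-- The equivalence class (as a finset of players) of player `i`. -/
def cluster (cls : ι → κ) (i : ι) : Finset ι :=
  Finset.univ.filter (fun j => cls j = cls i)

/-- The centroid distribution `p̄`: player `i` is assigned the average of the strategies of
the players in `i`'s class. -/
def centroid (cls : ι → κ) (p : ι → A → ℝ) : ι → A → ℝ :=
  fun i => ((cluster cls i).card : ℝ)⁻¹ • ∑ j ∈ cluster cls i, p j

/-- A joint strategy is class-constant if same-class players use identical strategies. -/
def classConst (cls : ι → κ) (p : ι → A → ℝ) : Prop :=
  ∀ i j, cls i = cls j → p i = p j

/-- The set of Nash equilibria. -/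
def NE (Y : ι → Finset A) (u : (ι → A) → ℝ) : Set (ι → A → ℝ) :=
  {p | p ∈ Delta Y ∧ ∀ i, ∀ qi ∈ simplex (Y i),
    U u (Function.update p i qi) ≤ U u p}

/-- The set of symmetric Nash equilibria relative to the partition `cls`. -/
def SNE (Y : ι → Finset A) (u : (ι → A) → ℝ) (cls : ι → κ) : Set (ι → A → ℝ) :=
  {p | p ∈ NE Y u ∧ classConst cls p}

/-- The set of mean-centric equilibria relative to the partition `cls`:
`U(pᵢ, p̄_{-i}) ≥ U(pᵢ', p̄_{-i})` for all `pᵢ' ∈ Δᵢ` and all `i`. -/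
def MCE (Y : ι → Finset A) (u : (ι → A) → ℝ) (cls : ι → κ) : Set (ι → A → ℝ) :=
  {p | p ∈ Delta Y ∧ ∀ i, ∀ qi ∈ simplex (Y i),
    U u (Function.update (centroid cls p) i qi)
      ≤ U u (Function.update (centroid cls p) i (p i))}

/-- `V(p) = (1/n) ∑ᵢ U(pᵢ, p̄_{-i})`. -/
def Vfun (u : (ι → A) → ℝ) (cls : ι → κ) (p : ι → A → ℝ) : ℝ :=
  (Fintype.card ι : ℝ)⁻¹ * ∑ i, U u (Function.update (centroid cls p) i (p i))

/-- A discrete-time ECFP process w.r.t. `(Γ, 𝒞)`: `q(1) = a(1)`,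
`q(t+1) = q(t) + γₜ (a(t+1) − q(t))` and `a(t+1) ∈ BR^{εₜ}(q̄(t))` for all `t`
(time is indexed by `ℕ`, i.e. `t = 0` plays the role of `t = 1` in the paper). -/
structure IsECFP (Y : ι → Finset A) (u : (ι → A) → ℝ) (cls : ι → κ)
    (γ ε : ℕ → ℝ) (a q : ℕ → ι → A → ℝ) : Prop where
  a_init_mem : a 0 ∈ Delta Y
  q_mem : ∀ t, q t ∈ Delta Y
  init : q 0 = a 0
  step : ∀ t, q (t + 1) = q t + γ t • (a (t + 1) - q t)
  br : ∀ t, a (t + 1) ∈ BR Y u (ε t) (centroid cls (q t))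

/-- A solution of the differential inclusion `ẋ ∈ F(x)` taking values in `Δⁿ`:
an everywhere-`Δⁿ`-valued trajectory on `[0,∞)` which is the integral of a locally
integrable selection `g(t) ∈ F(x(t))` (a.e.). -/
def IsSolution (Y : ι → Finset A) (F : (ι → A → ℝ) → Set (ι → A → ℝ))
    (x : ℝ → ι → A → ℝ) : Prop :=
  (∀ t : ℝ, 0 ≤ t → x t ∈ Delta Y) ∧
  ∃ g : ℝ → ι → A → ℝ,
    LocallyIntegrableOn g (Set.Ici (0 : ℝ)) ∧
    (∀ᵐ t ∂(volume.restrict (Set.Ici (0 : ℝ))), g t ∈ F (x t)) ∧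
    ∀ t : ℝ, 0 ≤ t → x t = x 0 + ∫ s in Set.Ioc (0 : ℝ) t, g s

/-- Right-hand side of the joint CT-ECFP differential inclusion `q̇ ∈ BR(q̄) − q`. -/
def Fjoint (Y : ι → Finset A) (u : (ι → A) → ℝ) (cls : ι → κ)
    (q : ι → A → ℝ) : Set (ι → A → ℝ) :=
  (fun b => b - q) '' BR Y u 0 (centroid cls q)

/-- Right-hand side of the centroid CT-ECFP differential inclusion `ẏ ∈ BR(y) − y`. -/
def Fcent (Y : ι → Finset A) (u : (ι → A) → ℝ)
    (y : ι → A → ℝ) : Set (ι → A → ℝ) :=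
  (fun b => b - y) '' BR Y u 0 y

/-- The ω-limit set of a continuous-time trajectory: all limits of sequences
`x(t_k)` with `t_k → ∞`. -/
def omegaLimitSet (x : ℝ → ι → A → ℝ) : Set (ι → A → ℝ) :=
  {p | ∃ tk : ℕ → ℝ, Tendsto tk atTop atTop ∧ Tendsto (fun k => x (tk k)) atTop (𝓝 p)}

/-- The set of limit points of a (discrete-time) sequence. -/
def seqLimitPoints (q : ℕ → ι → A → ℝ) : Set (ι → A → ℝ) :=
  {p | ∃ φ : ℕ → ℕ, StrictMono φ ∧ Tendsto (fun k => q (φ k)) atTop (𝓝 p)}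

/-- A compact set `X ⊆ Δⁿ` is internally chain transitive for the inclusion `ẋ ∈ F(x)`:
any two points of `X` can be joined, for every `ε > 0` and `T > 0`, by finitely many
solution pieces of duration `> T` staying in `X`, with jumps of size `≤ ε`. -/
def InternallyChainTransitive (Y : ι → Finset A)
    (F : (ι → A → ℝ) → Set (ι → A → ℝ)) (X : Set (ι → A → ℝ)) : Prop :=
  IsCompact X ∧ X ⊆ Delta Y ∧
  ∀ ξ ∈ X, ∀ η ∈ X, ∀ ε : ℝ, 0 < ε → ∀ T : ℝ, 0 < T →
    ∃ k : ℕ, 0 < k ∧ ∃ x : ℕ → ℝ → ι → A → ℝ, ∃ tt : ℕ → ℝ,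
      (∀ i < k, IsSolution Y F (x i)) ∧
      (∀ i < k, T < tt i) ∧
      (∀ i < k, ∀ s : ℝ, 0 ≤ s → s ≤ tt i → x i s ∈ X) ∧
      (∀ i, i + 1 < k → ‖x i (tt i) - x (i + 1) 0‖ ≤ ε) ∧
      ‖x 0 0 - ξ‖ ≤ ε ∧ ‖x (k - 1) (tt (k - 1)) - η‖ ≤ ε

/-!
`U` is affine in each player's own strategy, so `U(p̄)` is the average, over the players `j` in
the class of `i`, of `U(p_j, p̄_{-i})`. As `p̄_i = p̄_j`, swapping `i` and `j` does not change `U`,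
which turns `U(p_j, p̄_{-i})` into `U(p_j, p̄_{-j})`; by the MCE property this dominates
`U(q, p̄_{-j}) = U(q, p̄_{-i})`. Averaging over `j` gives `U(q, p̄_{-i}) ≤ U(p̄)`.
-/

omit [Fintype A] in
theorem convex_simplex (Y : Finset A) : Convex ℝ (simplex Y) := by
  rintro p ⟨hp₀, hpY, hp₁⟩ q ⟨hq₀, hqY, hq₁⟩ a b ha hb hab
  refine ⟨fun x => ?_, fun x hx => ?_, ?_⟩
  · have := hp₀ x; have := hq₀ x
    simp only [Pi.add_apply, Pi.smul_apply, smul_eq_mul]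
    positivity
  · simp [hpY x hx, hqY x hx]
  · simp only [Pi.add_apply, Pi.smul_apply, smul_eq_mul, Finset.sum_add_distrib,
      ← Finset.mul_sum, hp₁, hq₁, mul_one, hab]

omit [Fintype ι] [Fintype A] in
theorem update_mem_Delta {Y : ι → Finset A} {p : ι → A → ℝ} (hp : p ∈ Delta Y) {i : ι}
    {v : A → ℝ} (hv : v ∈ simplex (Y i)) : Function.update p i v ∈ Delta Y :=
  (Function.forall_update_iff p (p := fun k w => w ∈ simplex (Y k))).2 ⟨hv, fun k _ => hp k⟩

theorem U_update (u : (ι → A) → ℝ) (p : ι → A → ℝ) (i : ι) (v : A → ℝ) :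
    U u (Function.update p i v) =
      ∑ y : ι → A, u y * (v (y i) * ∏ k ∈ Finset.univ.erase i, p k (y k)) := by
  refine Finset.sum_congr rfl fun y _ => ?_
  rw [← Finset.mul_prod_erase _ _ (Finset.mem_univ i), Function.update_self]
  congr 2
  exact Finset.prod_congr rfl fun k hk => by
    rw [Function.update_of_ne (Finset.ne_of_mem_erase hk)]

theorem U_update_sum {ι' : Type*} (u : (ι → A) → ℝ) (p : ι → A → ℝ) (i : ι) (s : Finset ι')
    (f : ι' → A → ℝ) :
    U u (Function.update p i (∑ j ∈ s, f j)) = ∑ j ∈ s, U u (Function.update p i (f j)) := by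
  simp only [U_update, Finset.sum_apply, Finset.sum_mul, Finset.mul_sum]
  exact Finset.sum_comm

theorem U_update_smul (u : (ι → A) → ℝ) (p : ι → A → ℝ) (i : ι) (c : ℝ) (v : A → ℝ) :
    U u (Function.update p i (c • v)) = c * U u (Function.update p i v) := by
  simp only [U_update, Pi.smul_apply, smul_eq_mul, Finset.mul_sum]
  exact Finset.sum_congr rfl fun y _ => by ring

theorem U_comp_perm {Y : ι → Finset A} {u : (ι → A) → ℝ} (σ : Equiv.Perm ι)
    (hu : ∀ y : ι → A, (∀ k, y k ∈ Y k) → u (y ∘ σ) = u y) {P : ι → A → ℝ}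
    (hP : P ∈ Delta Y) : U u (P ∘ σ) = U u P := by
  unfold U
  refine Fintype.sum_equiv (Equiv.arrowCongr σ (Equiv.refl A)) _ _ fun y => ?_
  change u y * ∏ k, P (σ k) (y k) = u (y ∘ σ.symm) * ∏ k, P k (y (σ.symm k))
  rw [← Equiv.prod_comp σ (fun k => P k (y (σ.symm k)))]
  simp only [Equiv.symm_apply_apply]
  -- profiles outside `∏ₖ Y k` carry zero weight, so `u` need only be invariant on `∏ₖ Y k`
  rcases eq_or_ne (∏ k, P (σ k) (y k)) 0 with h | h
  · rw [h, mul_zero, mul_zero]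
  · have hy : ∀ k, (y ∘ σ.symm) k ∈ Y k := fun k => by
      by_contra hk
      exact Finset.prod_ne_zero_iff.1 h (σ.symm k) (Finset.mem_univ _)
        ((hP _).2.1 _ (by simpa using hk))
    rw [← hu _ hy, Function.comp_assoc, Equiv.symm_comp_self, Function.comp_id]

theorem comp_swap_eq_self {α β : Type*} [DecidableEq α] {f : α → β} {i j : α} (h : f i = f j) :
    f ∘ Equiv.swap i j = f := by
  rw [Equiv.comp_swap_eq_update, h, Function.update_eq_self, ← h, Function.update_eq_self]

theorem update_comp_swap {α β : Type*} [DecidableEq α] {f : α → β} {i j : α} (h : f i = f j)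
    (v : β) : Function.update f i v ∘ Equiv.swap i j = Function.update f j v := by
  rw [Function.update_comp_equiv, Equiv.symm_swap, Equiv.swap_apply_left, comp_swap_eq_self h]

omit [Fintype ι] [Fintype A] [DecidableEq κ] in
theorem PermInvariant.comp_swap {Y : ι → Finset A} {u : (ι → A) → ℝ} {cls : ι → κ}
    (h : PermInvariant Y u cls) {i j : ι} (hij : cls i = cls j) (y : ι → A)
    (hy : ∀ k, y k ∈ Y k) : u (y ∘ Equiv.swap i j) = u y := by
  rw [Equiv.swap_comm, Equiv.comp_swap_eq_update]
  exact (h i j hij).2 y hy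

omit [DecidableEq κ] in
theorem PermInvariant.U_update_eq {Y : ι → Finset A} {u : (ι → A) → ℝ} {cls : ι → κ}
    (h : PermInvariant Y u cls) {P : ι → A → ℝ} (hP : P ∈ Delta Y) {i j : ι}
    (hij : cls i = cls j) (hPij : P i = P j) {v : A → ℝ} (hv : v ∈ simplex (Y i)) :
    U u (Function.update P i v) = U u (Function.update P j v) := by
  rw [← update_comp_swap hPij, U_comp_perm _ (h.comp_swap hij) (update_mem_Delta hP hv)]

omit [DecidableEq ι] in
theorem mem_cluster {cls : ι → κ} {i j : ι} : j ∈ cluster cls i ↔ cls j = cls i := by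
  simp [cluster]

omit [DecidableEq ι] [Fintype A] in
theorem centroid_classConst (cls : ι → κ) (p : ι → A → ℝ) : classConst cls (centroid cls p) := by
  intro i j hij
  simp only [centroid, cluster, hij]

omit [DecidableEq ι] [Fintype A] in
theorem centroid_mem_Delta {Y : ι → Finset A} {cls : ι → κ}
    (hY : ∀ i j, cls i = cls j → Y i = Y j) {p : ι → A → ℝ} (hp : p ∈ Delta Y) :
    centroid cls p ∈ Delta Y := by
  intro i
  have hC : (cluster cls i).Nonempty := ⟨i, mem_cluster.2 rfl⟩
  rw [centroid, Finset.smul_sum]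
  refine (convex_simplex (Y i)).sum_mem (fun _ _ => by positivity) ?_ fun j hj => ?_
  · simp [hC.card_pos.ne']
  · rw [hY i j (mem_cluster.1 hj).symm]
    exact hp j

theorem U_centroid (u : (ι → A) → ℝ) (cls : ι → κ) (p : ι → A → ℝ) (i : ι) :
    U u (centroid cls p) = ((cluster cls i).card : ℝ)⁻¹ *
      ∑ j ∈ cluster cls i, U u (Function.update (centroid cls p) i (p j)) := by
  conv_lhs => rw [← Function.update_eq_self i (centroid cls p)]
  rw [← U_update_sum, ← U_update_smul]
  rfl

theorem U_update_centroid_le_of_mem_MCE {Y : ι → Finset A} {u : (ι → A) → ℝ} {cls : ι → κ}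
    (hpi : PermInvariant Y u cls) {p : ι → A → ℝ} (hp : p ∈ MCE Y u cls) (i : ι)
    {q : A → ℝ} (hq : q ∈ simplex (Y i)) :
    U u (Function.update (centroid cls p) i q) ≤ U u (centroid cls p) := by
  obtain ⟨hpΔ, hmce⟩ := hp
  have hcΔ := centroid_mem_Delta (fun i j h => (hpi i j h).1) hpΔ
  have hC : (cluster cls i).Nonempty := ⟨i, mem_cluster.2 rfl⟩
  have key : ∀ j ∈ cluster cls i, U u (Function.update (centroid cls p) i q) ≤
      U u (Function.update (centroid cls p) i (p j)) := by
    intro j hj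
    have hij := (mem_cluster.1 hj).symm
    have hYij : Y i = Y j := (hpi i j hij).1
    have hcij := centroid_classConst cls p i j hij
    rw [hpi.U_update_eq hcΔ hij hcij hq, hpi.U_update_eq hcΔ hij hcij (hYij ▸ hpΔ j)]
    exact hmce j q (hYij ▸ hq)
  calc U u (Function.update (centroid cls p) i q)
      = ((cluster cls i).card : ℝ)⁻¹ *
          ∑ _j ∈ cluster cls i, U u (Function.update (centroid cls p) i q) := by
        rw [Finset.sum_const, nsmul_eq_mul,
          inv_mul_cancel_left₀ (by exact_mod_cast hC.card_pos.ne')]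
    _ ≤ ((cluster cls i).card : ℝ)⁻¹ *
          ∑ j ∈ cluster cls i, U u (Function.update (centroid cls p) i (p j)) := by
        gcongr with j hj
        exact key j hj
    _ = U u (centroid cls p) := (U_centroid u cls p i).symm

variable [Nonempty ι]

theorem centroid_of_MCE_mem_SNE_general
    (Y : ι → Finset A) (u : (ι → A) → ℝ)
    (cls : ι → κ) (hpi : PermInvariant Y u cls)
    (p : ι → A → ℝ) (hp : p ∈ MCE Y u cls) :
    centroid cls p ∈ SNE Y u cls :=
  ⟨⟨centroid_mem_Delta (fun i j h => (hpi i j h).1) hp.1,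
      fun i _ hq => U_update_centroid_le_of_mem_MCE hpi hp i hq⟩,
    centroid_classConst cls p⟩

/-- If `p` is a mean-centric equilibrium then its centroid distribution `p̄` is a
symmetric Nash equilibrium. -/
theorem centroid_of_MCE_mem_SNE
    (Y : ι → Finset A) (hY : ∀ i, (Y i).Nonempty) (u : (ι → A) → ℝ)
    (cls : ι → κ) (hpi : PermInvariant Y u cls)
    (p : ι → A → ℝ) (hp : p ∈ MCE Y u cls) :
    centroid cls p ∈ SNE Y u cls :=
  centroid_of_MCE_mem_SNE_general Y u cls hpi p hp

end ECFP
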